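/- Fix a real parameter g with −2 < g < 2 and set h = √(1 − g²/4), G = g/h. Then for every (b₀,q₀) with q₀ > 0, the function q ↦ K(b₀,q)² is differentiable at q₀ with derivative 2·q₀·K(b₀,q₀)² / B(b₀,q₀). (This is the (q-component of the) formula y_i = (u_i + g·q·b_i)·K²/B for the covariant tangent vector.) -/

import Mathlib

noncomputable def finsH (g : ℝ) : ℝ := Real.sqrt (1 - g ^ 2 / 4)

noncomputable def finsG (g : ℝ) : ℝ := g / finsH g

/-- The characteristic quadratic form `B(b,q) = b² + g·q·b + q²`. -/
noncomputable def finsB (g b q : ℝ) : ℝ := b ^ 2 + g * q * b + q ^ 2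

/-- `L(b,q) = q + (g/2)·b`. -/
noncomputable def finsL (g b q : ℝ) : ℝ := q + (g / 2) * b

/-- The piecewise-defined Finsleroid function `f` on the half-plane `q > 0`. -/
noncomputable def finsF (g b q : ℝ) : ℝ :=
  if 0 < b then -Real.arctan (finsG g / 2) + Real.arctan (finsL g b q / (finsH g * b))
  else if b < 0 then
    Real.pi - Real.arctan (finsG g / 2) + Real.arctan (finsL g b q / (finsH g * b))
  else Real.pi / 2 - Real.arctan (finsG g / 2)

/-- The Finsleroid-regular metric function `K(b,q) = √(B(b,q))·exp(−(G/2)·f(b,q))`. -/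
noncomputable def finsK (g b q : ℝ) : ℝ :=
  Real.sqrt (finsB g b q) * Real.exp (-(finsG g / 2) * finsF g b q)

/-!
Write `K² = B·exp(−G·f)`. In `q`, `∂B = g·b + 2q`, and since `B = L² + (h·b)²` the arctangent in
`f` gives `∂f = h·b / B` (also for `b = 0`, where `f` is constant). As `G·h = g`, the two
contributions `g·b·K²/B` and `−G·h·b·K²/B` cancel, leaving `2q·K²/B`.
-/

open Real

theorem finsH_sq {g : ℝ} (hg1 : -2 < g) (hg2 : g < 2) : finsH g ^ 2 = 1 - g ^ 2 / 4 := by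
  rw [finsH, sq_sqrt]
  nlinarith

theorem finsH_pos {g : ℝ} (hg1 : -2 < g) (hg2 : g < 2) : 0 < finsH g :=
  sqrt_pos.mpr (by nlinarith)

theorem finsG_mul_finsH {g : ℝ} (hg1 : -2 < g) (hg2 : g < 2) : finsG g * finsH g = g :=
  div_mul_cancel₀ g (finsH_pos hg1 hg2).ne'

theorem finsB_eq_finsL_sq_add {g : ℝ} (hg1 : -2 < g) (hg2 : g < 2) (b q : ℝ) :
    finsB g b q = finsL g b q ^ 2 + (finsH g * b) ^ 2 := by
  rw [finsB, finsL, mul_pow, finsH_sq hg1 hg2]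
  ring

theorem finsB_nonneg {g : ℝ} (hg1 : -2 < g) (hg2 : g < 2) (b q : ℝ) : 0 ≤ finsB g b q := by
  rw [finsB_eq_finsL_sq_add hg1 hg2]
  positivity

theorem finsB_pos {g : ℝ} (hg1 : -2 < g) (hg2 : g < 2) (b : ℝ) {q : ℝ} (hq : q ≠ 0) :
    0 < finsB g b q := by
  rw [finsB_eq_finsL_sq_add hg1 hg2]
  rcases eq_or_ne b 0 with rfl | hb
  · simpa [finsL] using sq_pos_of_ne_zero hq
  · have := (finsH_pos hg1 hg2).ne'
    positivity

theorem finsK_sq {g : ℝ} (hg1 : -2 < g) (hg2 : g < 2) (b q : ℝ) :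
    finsK g b q ^ 2 = finsB g b q * exp (-finsG g * finsF g b q) := by
  rw [finsK, mul_pow, sq_sqrt (finsB_nonneg hg1 hg2 b q), ← exp_nat_mul]
  ring_nf

theorem hasDerivAt_finsB_q (g b q : ℝ) :
    HasDerivAt (fun q => finsB g b q) (g * b + 2 * q) q :=
  ((((hasDerivAt_id q).const_mul g).mul_const b).const_add (b ^ 2)).add (hasDerivAt_pow 2 q)
    |>.congr_deriv (by norm_num)

theorem hasDerivAt_arctan_finsL_div {g : ℝ} (hg1 : -2 < g) (hg2 : g < 2) {b : ℝ} (hb : b ≠ 0)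
    (q : ℝ) :
    HasDerivAt (fun q => arctan (finsL g b q / (finsH g * b))) (finsH g * b / finsB g b q) q := by
  have hh := (finsH_pos hg1 hg2).ne'
  have hL : HasDerivAt (fun q => finsL g b q / (finsH g * b)) (1 / (finsH g * b)) q :=
    ((hasDerivAt_id q).add_const (g / 2 * b)).div_const _
  refine ((hasDerivAt_arctan _).comp q hL).congr_deriv ?_
  rw [finsB_eq_finsL_sq_add hg1 hg2]
  field_simp
  ring

theorem hasDerivAt_finsF_q {g : ℝ} (hg1 : -2 < g) (hg2 : g < 2) (b q : ℝ) :
    HasDerivAt (fun q => finsF g b q) (finsH g * b / finsB g b q) q := by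
  rcases lt_trichotomy b 0 with hb | rfl | hb
  · simp only [finsF, if_neg hb.not_gt, if_pos hb]
    exact (hasDerivAt_arctan_finsL_div hg1 hg2 hb.ne q).const_add _
  · simpa [finsF] using hasDerivAt_const q (π / 2 - arctan (finsG g / 2))
  · simp only [finsF, if_pos hb]
    exact (hasDerivAt_arctan_finsL_div hg1 hg2 hb.ne' q).const_add _

/-- for `q₀ > 0`, the function `q ↦ K(b₀,q)²` is differentiable at
`q₀` with derivative `2·q₀·K(b₀,q₀)² / B(b₀,q₀)`. -/
theorem finsleroid_Ksq_deriv_q (g : ℝ) (hg1 : -2 < g) (hg2 : g < 2)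
    (b₀ q₀ : ℝ) (hq : 0 < q₀) :
    HasDerivAt (fun q : ℝ => (finsK g b₀ q) ^ 2)
      (2 * q₀ * (finsK g b₀ q₀) ^ 2 / finsB g b₀ q₀) q₀ := by
  have hB := (finsB_pos hg1 hg2 b₀ hq.ne').ne'
  simp only [finsK_sq hg1 hg2]
  refine ((hasDerivAt_finsB_q g b₀ q₀).mul
    ((hasDerivAt_finsF_q hg1 hg2 b₀ q₀).const_mul (-finsG g)).exp).congr_deriv ?_
  field_simp
  linear_combination -b₀ * finsG_mul_finsH hg1 hg2
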